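/- arXiv:1304.7876 — 3 statements merged into one kernel-verified Lean document; each statement's English description precedes it below -/
import Mathlib

section
/- The expected number of F_{q^k}-points on a p-rank 0 Artin-Schreier cover y^p − y = g(x), with g ranging uniformly over polynomials of degree d over F_q (p ∤ d), converges as d → ∞ to q^k + 1 if p ∤ k, and to q^k + 1 + (p−1)q^{k/p} if p | k. -/
/-!
Write `g = c X^d + h` with `c ≠ 0` and `deg h < d`. For fixed `α ∈ L` the map
`h ↦ Tr_{L/𝔽_p}(h(α))` is additive, so as soon as it is nonzero each of its values is taken by
exactly a `1/p`-th of the `h`. Since the `h` reach every `K`-multiple of `α^i` with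
`i < [L : K] ≤ d`, this map vanishes only when `Tr_{L/K}` vanishes on `K(α)`, i.e. when
`p ∣ [L : K(α)]`; for such `α` every `g` contributes `p` points. So for `d ≥ k` the average is
exactly `q^k + 1 + (p - 1) · #{α | p ∣ [L : K(α)]}`, and these `α` form the subfield of `L` of
degree `k / p` over `K` (there are none unless `p ∣ k`).
-/

open Finset Polynomial IntermediateField Module

theorem AddMonoidHom.card_mul_card_fiber_of_surjective {G M : Type*} [AddGroup G] [Fintype G]
    [AddGroup M] [Fintype M] [DecidableEq M] {f : G →+ M} (hf : Function.Surjective f) (t : M) :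
    Fintype.card M * #{g | f g = t} = Fintype.card G := by
  calc Fintype.card M * #{g | f g = t} = ∑ s, #{g | f g = s} := by
        rw [sum_congr rfl fun s _ => card_fiber_eq_of_mem_range f (hf s) (hf t), sum_const,
          card_univ, smul_eq_mul]
    _ = Fintype.card G := (card_eq_sum_card_fiberwise fun g _ => mem_univ (f g)).symm

theorem AddMonoidHom.surjective_of_ne_zero_zmod {G : Type*} [AddMonoid G] {p : ℕ} [Fact p.Prime]
    {f : G →+ ZMod p} (hf : f ≠ 0) : Function.Surjective f := by
  obtain ⟨g, hg⟩ := DFunLike.ne_iff.mp hf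
  refine fun t => ⟨(t / f g).val • g, ?_⟩
  rw [map_nsmul, nsmul_eq_mul, ZMod.natCast_zmod_val, div_mul_cancel₀ _ hg]

namespace Polynomial

variable {R : Type*}

noncomputable instance [Semiring R] [Fintype R] (n : ℕ) : Fintype (degreeLT R n) :=
  Fintype.ofEquiv _ (degreeLTEquiv R n).toEquiv.symm

section LeadingTerm

variable [Semiring R] {c : R} {d : ℕ} {h : R[X]}

theorem degree_lt_degree_C_mul_X_pow_of_mem_degreeLT (hc : c ≠ 0) (hh : h ∈ degreeLT R d) :
    h.degree < (C c * X ^ d).degree := by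
  rw [degree_C_mul_X_pow d hc]
  exact mem_degreeLT.mp hh

theorem natDegree_C_mul_X_pow_add_of_mem_degreeLT (hc : c ≠ 0) (hh : h ∈ degreeLT R d) :
    (C c * X ^ d + h).natDegree = d := by
  rw [natDegree_add_eq_left_of_degree_lt (degree_lt_degree_C_mul_X_pow_of_mem_degreeLT hc hh),
    natDegree_C_mul_X_pow d c hc]

theorem leadingCoeff_C_mul_X_pow_add_of_mem_degreeLT (hc : c ≠ 0) (hh : h ∈ degreeLT R d) :
    (C c * X ^ d + h).leadingCoeff = c := by
  rw [add_comm,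
    leadingCoeff_add_of_degree_lt (degree_lt_degree_C_mul_X_pow_of_mem_degreeLT hc hh),
    leadingCoeff_C_mul_X_pow]

theorem eraseLead_C_mul_X_pow_add_of_mem_degreeLT (hc : c ≠ 0) (hh : h ∈ degreeLT R d) :
    (C c * X ^ d + h).eraseLead = h := by
  rw [eraseLead_add_of_degree_lt_left (degree_lt_degree_C_mul_X_pow_of_mem_degreeLT hc hh),
    eraseLead_C_mul_X_pow, zero_add]

theorem eraseLead_mem_degreeLT_of_natDegree_eq {g : R[X]} (hd : 0 < d) (hg : g.natDegree = d) :
    g.eraseLead ∈ degreeLT R d := by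
  have hg0 := ne_zero_of_natDegree_gt (hg.symm ▸ hd : 0 < g.natDegree)
  rw [mem_degreeLT, ← hg, ← degree_eq_natDegree hg0]
  exact degree_eraseLead_lt hg0

noncomputable def natDegreeEqEquiv (hd : 0 < d) :
    {c : R // c ≠ 0} × degreeLT R d ≃ {g : R[X] // g.natDegree = d} where
  toFun x :=
    ⟨C x.1.1 * X ^ d + (x.2 : R[X]), natDegree_C_mul_X_pow_add_of_mem_degreeLT x.1.2 x.2.2⟩
  invFun g :=
    (⟨g.1.leadingCoeff, leadingCoeff_ne_zero.mpr (ne_zero_of_natDegree_gt (g.2.symm ▸ hd))⟩,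
      ⟨g.1.eraseLead, eraseLead_mem_degreeLT_of_natDegree_eq hd g.2⟩)
  left_inv x := Prod.ext (Subtype.ext (leadingCoeff_C_mul_X_pow_add_of_mem_degreeLT x.1.2 x.2.2))
    (Subtype.ext (eraseLead_C_mul_X_pow_add_of_mem_degreeLT x.1.2 x.2.2))
  right_inv g := by
    ext1
    conv_rhs => rw [← g.1.eraseLead_add_C_mul_X_pow, g.2]
    exact add_comm _ _

@[simp]
theorem natDegreeEqEquiv_apply (hd : 0 < d) (x : {c : R // c ≠ 0} × degreeLT R d) :
    (natDegreeEqEquiv hd x : R[X]) = C x.1.1 * X ^ d + (x.2 : R[X]) :=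
  rfl

end LeadingTerm

end Polynomial

def TraceVanishesOnAdjoin (K : Type*) {L : Type*} [Field K] [Field L] [Algebra K L] (α : L) :
    Prop :=
  ∀ x ∈ K⟮α⟯, Algebra.trace K L x = 0

section Trace

variable {K L : Type*} [Field K] [Field L] [Algebra K L]

theorem trace_aeval_eq_zero_of_traceVanishesOnAdjoin {α : L} (hα : TraceVanishesOnAdjoin K α)
    (g : K[X]) : Algebra.trace K L (aeval α g) = 0 :=
  hα _ (algebra_adjoin_le_adjoin K {α} (aeval_mem_adjoin_singleton K α))

variable [FiniteDimensional K L]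

theorem IntermediateField.forall_trace_eq_zero_iff [Algebra.IsSeparable K L]
    (E : IntermediateField K L) :
    (∀ x ∈ E, Algebra.trace K L x = 0) ↔ (finrank E L : K) = 0 := by
  have htrace (x : E) : Algebra.trace K L x = (finrank E L : K) * Algebra.trace K E x := by
    rw [show (x : L) = algebraMap E L x from rfl, ← Algebra.trace_trace (S := E),
      Algebra.trace_algebraMap, map_nsmul, nsmul_eq_mul]
  constructor
  · intro h
    obtain ⟨y, hy⟩ := Algebra.trace_surjective K E 1
    simpa [htrace, hy] using h y y.2
  · intro h x hx
    rw [htrace ⟨x, hx⟩, h, zero_mul]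

theorem exists_natDegree_lt_trace_aeval_ne_zero {α : L} (hα : ¬ TraceVanishesOnAdjoin K α) :
    ∃ g : K[X], g.natDegree < finrank K L ∧ Algebra.trace K L (aeval α g) ≠ 0 := by
  obtain ⟨x, hx, hx0⟩ : ∃ x ∈ K⟮α⟯, Algebra.trace K L x ≠ 0 := by
    simpa [TraceVanishesOnAdjoin] using hα
  let pb := adjoin.powerBasis (Algebra.IsIntegral.isIntegral (R := K) α)
  obtain ⟨g, hg, hxg⟩ := pb.exists_eq_aeval ⟨x, hx⟩
  refine ⟨g, hg.trans_le ?_, ?_⟩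
  · rw [← pb.finrank]
    exact K⟮α⟯.toSubmodule.finrank_le
  · rwa [show aeval α g = x from
      (aeval_coe (S := K⟮α⟯) _ g).trans (congrArg Subtype.val hxg).symm]

theorem exists_mem_degreeLT_trace_aeval_ne_zero {F : Type*} [Field F] [Algebra F K]
    [Algebra F L] [IsScalarTower F K L] [FiniteDimensional F K] [Algebra.IsSeparable F K] {α : L}
    (hα : ¬ TraceVanishesOnAdjoin K α) {d : ℕ} (hd : finrank K L ≤ d) :
    ∃ h ∈ degreeLT K d, Algebra.trace F L (aeval α h) ≠ 0 := by
  obtain ⟨g, hg, ht⟩ := exists_natDegree_lt_trace_aeval_ne_zero hα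
  obtain ⟨y, hy⟩ := Algebra.trace_surjective F K 1
  refine ⟨(y / Algebra.trace K L (aeval α g)) • g, Submodule.smul_mem _ _ ?_, ?_⟩
  · exact mem_degreeLT.mpr (degree_le_natDegree.trans_lt (by exact_mod_cast hg.trans_le hd))
  · rw [← Algebra.trace_trace (S := K), map_smul, map_smul, smul_eq_mul, div_mul_cancel₀ _ ht,
      hy]
    exact one_ne_zero

end Trace

section FiniteField

variable {K L : Type*} [Field K] [Fintype K] [Field L] [Fintype L] [Algebra K L]

theorem pow_card_pow_eq_self_iff_finrank_adjoin_dvd (α : L) (n : ℕ) :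
    α ^ Fintype.card K ^ n = α ↔ finrank K K⟮α⟯ ∣ n := by
  have hα : IsIntegral K α := Algebra.IsIntegral.isIntegral α
  rw [adjoin.finrank hα, (minpoly.irreducible hα).natDegree_dvd_iff_dvd_X_pow_card_pow_sub_X,
    minpoly.dvd_iff, Nat.card_eq_fintype_card]
  simp [sub_eq_zero]

theorem card_pow_card_pow_eq_self [DecidableEq L] {m : ℕ} (hm : 0 < m) (hmk : m ∣ finrank K L) :
    #{α : L | α ^ Fintype.card K ^ m = α} = Fintype.card K ^ m := by
  set q := Fintype.card K
  have hq : 1 < q := Fintype.one_lt_card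
  have hsep : (X ^ q ^ m - X : K[X]).Separable :=
    galois_poly_separable (ringChar K) _
      (dvd_pow (ringChar.dvd (FiniteField.cast_card_eq_zero K)) hm.ne')
  have hsplit : Splits ((X ^ q ^ m - X : K[X]).map (algebraMap K L)) := by
    have hL : Nat.card L = q ^ finrank K L := by
      rw [Nat.card_eq_fintype_card, Module.card_eq_pow_finrank (K := K)]
    simp only [Polynomial.map_sub, Polynomial.map_pow, map_X]
    refine (splits_X_pow_nat_card_sub_X (K := L)).of_dvd ?_ ?_ <;> rw [hL]
    · exact FiniteField.X_pow_card_pow_sub_X_ne_zero L finrank_pos.ne' hq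
    · exact dvd_pow_pow_sub_self_of_dvd hmk
  have hroots (α : L) : α ^ q ^ m = α ↔ α ∈ (X ^ q ^ m - X : K[X]).rootSet L := by
    rw [mem_rootSet_of_ne (FiniteField.X_pow_card_pow_sub_X_ne_zero K hm.ne' hq)]
    simp [sub_eq_zero]
  rw [← Fintype.card_subtype, Fintype.card_congr (Equiv.subtypeEquivRight hroots),
    card_rootSet_eq_natDegree hsep hsplit,
    FiniteField.X_pow_card_pow_sub_X_natDegree_eq K hm.ne' hq]

theorem traceVanishesOnAdjoin_iff_dvd {p : ℕ} [CharP K p] (α : L) :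
    TraceVanishesOnAdjoin K α ↔ p ∣ finrank K⟮α⟯ L := by
  rw [TraceVanishesOnAdjoin, forall_trace_eq_zero_iff, CharP.cast_eq_zero_iff K p]

open scoped Classical in
theorem card_traceVanishesOnAdjoin (p : ℕ) [Fact p.Prime] [CharP K p] :
    #{α : L | TraceVanishesOnAdjoin K α} =
      if p ∣ finrank K L then Fintype.card K ^ (finrank K L / p) else 0 := by
  have htower (α : L) : finrank K K⟮α⟯ * finrank K⟮α⟯ L = finrank K L :=
    finrank_mul_finrank K K⟮α⟯ L
  split_ifs with hpk
  · have hm : 0 < finrank K L / p :=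
      Nat.div_pos (Nat.le_of_dvd finrank_pos hpk) (Fact.out : p.Prime).pos
    rw [← card_pow_card_pow_eq_self hm (Nat.div_dvd_of_dvd hpk)]
    congr 1
    refine filter_congr fun α _ => ?_
    rw [traceVanishesOnAdjoin_iff_dvd, pow_card_pow_eq_self_iff_finrank_adjoin_dvd,
      Nat.dvd_div_iff_mul_dvd hpk, ← htower, mul_comm p, Nat.mul_dvd_mul_iff_left finrank_pos]
  · refine card_eq_zero.mpr (filter_eq_empty_iff.mpr fun α _ hα => hpk ?_)
    rw [← htower]
    exact dvd_mul_of_dvd_right ((traceVanishesOnAdjoin_iff_dvd α).mp hα) _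

end FiniteField

section Average

variable {p : ℕ} [Fact p.Prime] {K L : Type*} [Field K] [Fintype K] [Field L] [Fintype L]
  [Algebra K L] [Algebra (ZMod p) K] [Algebra (ZMod p) L] [IsScalarTower (ZMod p) K L] {d : ℕ}

open scoped Classical in
theorem sum_ite_trace_aeval_natDegreeEqEquiv (hd : finrank K L ≤ d) (α : L) :
    ∑ x : {c : K // c ≠ 0} × degreeLT K d,
      (if Algebra.trace (ZMod p) L (aeval α (natDegreeEqEquiv (finrank_pos.trans_le hd) x).1) = 0
        then (p : ℝ) else 0) =
      Fintype.card ({c : K // c ≠ 0} × degreeLT K d) *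
        if TraceVanishesOnAdjoin K α then (p : ℝ) else 1 := by
  by_cases hα : TraceVanishesOnAdjoin K α
  · have htrace (g : K[X]) : Algebra.trace (ZMod p) L (aeval α g) = 0 := by
      rw [← Algebra.trace_trace (S := K), trace_aeval_eq_zero_of_traceVanishesOnAdjoin hα,
        map_zero]
    simp only [htrace, if_true, if_pos hα, sum_const, card_univ, nsmul_eq_mul]
  obtain ⟨h₀, hh₀, hne⟩ := exists_mem_degreeLT_trace_aeval_ne_zero (F := ZMod p) hα hd
  let φ : degreeLT K d →+ ZMod p :=
    (Algebra.trace (ZMod p) L).toAddMonoidHom.comp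
      ((aeval α).toAddMonoidHom.comp (degreeLT K d).subtype.toAddMonoidHom)
  have hφ : Function.Surjective φ :=
    AddMonoidHom.surjective_of_ne_zero_zmod (DFunLike.ne_iff.mpr ⟨⟨h₀, hh₀⟩, hne⟩)
  have hfiber (c : {c : K // c ≠ 0}) :
      ∑ h : degreeLT K d,
        (if Algebra.trace (ZMod p) L
            (aeval α (natDegreeEqEquiv (finrank_pos.trans_le hd) (c, h)).1) = 0
          then (p : ℝ) else 0) = Fintype.card (degreeLT K d) := by
    have hcard := AddMonoidHom.card_mul_card_fiber_of_surjective hφ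
      (-Algebra.trace (ZMod p) L (aeval α (C c.1 * X ^ d)))
    rw [ZMod.card] at hcard
    rw [← sum_filter, sum_const, nsmul_eq_mul, ← hcard]
    have hcond (h : degreeLT K d) :
        Algebra.trace (ZMod p) L
            (aeval α (natDegreeEqEquiv (finrank_pos.trans_le hd) (c, h)).1) = 0 ↔
          φ h = -Algebra.trace (ZMod p) L (aeval α (C c.1 * X ^ d)) := by
      rw [natDegreeEqEquiv_apply, map_add, map_add, add_comm, add_eq_zero_iff_eq_neg]
      rfl
    rw [filter_congr fun h _ => hcond h, Nat.cast_mul, mul_comm]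
  rw [Fintype.sum_prod_type, sum_congr rfl fun c _ => hfiber c]
  simp [hα, Fintype.card_prod]

open scoped Classical in
theorem tsum_div_card_natDegree_eq (hd : finrank K L ≤ d) :
    (∑' g : {g : K[X] // g.natDegree = d},
        (1 + ∑ α : L, if Algebra.trace (ZMod p) L (aeval α g.1) = 0 then (p : ℝ) else 0)) /
      Nat.card {g : K[X] // g.natDegree = d} =
      Fintype.card L + 1 + (p - 1) * #{α : L | TraceVanishesOnAdjoin K α} := by
  have hcard_ne_zero : (Fintype.card ({c : K // c ≠ 0} × degreeLT K d) : ℝ) ≠ 0 :=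
    Nat.cast_ne_zero.mpr (@Fintype.card_ne_zero _ _ ⟨(⟨1, one_ne_zero⟩, 0)⟩)
  have hcount : ∑ α : L, (if TraceVanishesOnAdjoin K α then (p : ℝ) else 1) =
      Fintype.card L + (p - 1) * #{α : L | TraceVanishesOnAdjoin K α} := by
    rw [sum_ite, sum_const, sum_const, nsmul_eq_mul, nsmul_eq_mul, mul_one, ← card_univ (α := L),
      ← card_filter_add_card_filter_not (s := univ) (fun α => TraceVanishesOnAdjoin K α)]
    push_cast
    ring
  let E := natDegreeEqEquiv (R := K) (finrank_pos.trans_le hd)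
  rw [← E.tsum_eq, tsum_fintype, ← Nat.card_congr E, Nat.card_eq_fintype_card]
  rw [sum_add_distrib, sum_comm,
    sum_congr rfl fun α _ => sum_ite_trace_aeval_natDegreeEqEquiv hd α, ← mul_sum, hcount,
    sum_const, card_univ, nsmul_eq_mul]
  field_simp
  ring

end Average

open Classical Polynomial in
theorem expected_points_rank_zero_general (p q k : ℕ) (hp : p.Prime)
    (K L : Type) [Field K] [Fintype K] [Field L] [Fintype L] [Algebra K L]
    [Algebra (ZMod p) L]
    (hK : Fintype.card K = q) (hL : Fintype.card L = q ^ k) :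
    ∀ ε : ℝ, 0 < ε → ∃ D : ℕ, ∀ d : ℕ, D ≤ d → ¬ p ∣ d →
      |(∑' g : {g : K[X] // g.natDegree = d},
            ((1 + ∑ α : L, if Algebra.trace (ZMod p) L (aeval α g.1) = 0
              then (p : ℝ) else 0 : ℝ))) /
          (Nat.card {g : K[X] // g.natDegree = d} : ℝ)
        - (if p ∣ k then (q : ℝ) ^ k + 1 + (p - 1) * (q : ℝ) ^ (k / p)
            else (q : ℝ) ^ k + 1)| < ε := by
  have : Fact p.Prime := ⟨hp⟩
  have : CharP L p := charP_of_injective_algebraMap' (ZMod p) p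
  have : CharP K p := (algebraMap K L).charP (algebraMap K L).injective p
  let : Algebra (ZMod p) K := ZMod.algebra K p
  have : IsScalarTower (ZMod p) K L := IsScalarTower.of_algebraMap_eq' (RingHom.ext_zmod _ _)
  have hk : finrank K L = k := Nat.pow_right_injective (hK ▸ Fintype.one_lt_card) <|
    show q ^ finrank K L = q ^ k by rw [← hL, ← hK, card_eq_pow_finrank (K := K) (V := L)]
  intro ε hε
  refine ⟨k, fun d hd _ => ?_⟩
  rw [tsum_div_card_natDegree_eq (hk ▸ hd), card_traceVanishesOnAdjoin p, hk, hL, hK]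
  split_ifs <;> push_cast <;> simpa using hε

open Classical Polynomial in
/-- The expected number of `F_{q^k}`-points on a `p`-rank `0` Artin–Schreier cover
`y^p − y = g(x)`, with `g` uniform over polynomials of degree `d` over `F_q`
(`p ∤ d`), converges as `d → ∞` to `q^k + 1` if `p ∤ k` and to
`q^k + 1 + (p−1)q^{k/p}` if `p | k`. -/
theorem expected_points_rank_zero (p q k : ℕ) (hp : p.Prime) (hodd : Odd p)
    (hq : ∃ a : ℕ, 0 < a ∧ q = p ^ a) (hk : 0 < k)
    (K L : Type) [Field K] [Fintype K] [Field L] [Fintype L] [Algebra K L]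
    [Algebra (ZMod p) L]
    (hK : Fintype.card K = q) (hL : Fintype.card L = q ^ k) :
    ∀ ε : ℝ, 0 < ε → ∃ D : ℕ, ∀ d : ℕ, D ≤ d → ¬ p ∣ d →
      |(∑' g : {g : K[X] // g.natDegree = d},
            ((1 + ∑ α : L, if Algebra.trace (ZMod p) L (aeval α g.1) = 0
              then (p : ℝ) else 0 : ℝ))) /
          (Nat.card {g : K[X] // g.natDegree = d} : ℝ)
        - (if p ∣ k then (q : ℝ) ^ k + 1 + (p - 1) * (q : ℝ) ^ (k / p)
            else (q : ℝ) ^ k + 1)| < ε :=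
  expected_points_rank_zero_general p q k hp K L hK hL
end

section
/- Let p be an odd prime, q a power of p, and let k_1 ≥ k_2 > 0 be integers with p ∤ k_1 k_2 not required; let e_1, e_2 ∈ {−1, 1} and h_1, h_2 integers with p ∤ h_1 h_2. Define T = Σ over m with m | gcd(k_1, k_2), mp ∤ k_1, mp ∤ k_2, and mp | (e_1 h_1 k_1 + e_2 h_2 k_2), of E(m) π(m) m^2, where π(m) is the number of monic irreducible polynomials of degree m over F_q and E(m) is any function with E(m) = 1 + O(m q^{−m}) and 0 ≤ E(m) ≤ 1. Then: if k_1 = k_2 and p | (e_1 h_1 + e_2 h_2), T = E(k_1) k_1 q^{k_1} + O(k_1 q^{k_1/2}); if k_1 = k_2 and p ∤ (e_1 h_1 + e_2 h_2), T = 0; if k_1 = 2 k_2, T = O(k_1 q^{k_1/2}); otherwise T = O(k_1 q^{k_1/3}). -/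
open Polynomial

/-- The number of monic irreducible polynomials of degree `m` over `K`. -/
noncomputable def monicIrreducibleCount (K : Type) [Field K] [Fintype K] (m : ℕ) : ℕ :=
  Nat.card {P : K[X] // P.Monic ∧ Irreducible P ∧ P.natDegree = m}

/-!
Sorting the `q ^ n` roots of `X ^ q ^ n - X` in an algebraic closure by the degree of their
minimal polynomial gives Gauss's formula `∑_{d ∣ n} d π(d) = q ^ n`, hence
`q ^ n - 2 q ^ (n / 2) ≤ n π(n) ≤ q ^ n`, and every summand of `T` is at most `m q ^ m`.
The indices of `T` divide both `k₁` and `k₂`: apart from `m = k₁ = k₂` they are at most `k₁ / 2`,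
and at most `k₁ / 3` unless `k₁ ∈ {k₂, 2 k₂}`. When `k₁ = k₂` and `p ∤ e₁h₁ + e₂h₂`, the condition
`mp ∣ (e₁h₁ + e₂h₂) k₁` forces `mp ∣ k₁`, so no index survives.
-/

open Finset

theorem Nat.le_half_of_mem_properDivisors {d n : ℕ} (hd : d ∈ n.properDivisors) : d ≤ n / 2 := by
  rw [Nat.le_div_iff_mul_le two_pos]
  calc d * 2 ≤ d * (n / d) := Nat.mul_le_mul_left d (Nat.one_lt_div_of_mem_properDivisors hd)
    _ = n := Nat.mul_div_cancel' (Nat.mem_properDivisors.1 hd).1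

theorem Nat.sum_pow_le_two_mul_pow {b M : ℕ} (hb : 2 ≤ b) {s : Finset ℕ} (hs : ∀ k ∈ s, k ≤ M) :
    ∑ k ∈ s, b ^ k ≤ 2 * b ^ M := by
  have hlt := Nat.geomSum_lt hb (s := range M) fun k hk => mem_range.1 hk
  calc ∑ k ∈ s, b ^ k ≤ ∑ k ∈ range (M + 1), b ^ k :=
        sum_le_sum_of_subset fun k hk => mem_range.2 (Nat.lt_succ_of_le (hs k hk))
    _ = ∑ k ∈ range M, b ^ k + b ^ M := sum_range_succ _ _
    _ ≤ 2 * b ^ M := by omega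

theorem pow_div_le_rpow_div {x : ℝ} (hx : 1 ≤ x) (n c : ℕ) : x ^ (n / c) ≤ x ^ ((n : ℝ) / c) := by
  rw [← Real.rpow_natCast]
  exact Real.rpow_le_rpow_of_exponent_le hx Nat.cast_div_le

section Counting

variable {K : Type} [Field K] [Fintype K]

local notation "q" => Fintype.card K
local notation "Ω" => AlgebraicClosure K

variable (K) in
noncomputable def frobeniusFixedPoints (n : ℕ) : Finset Ω :=
  (rootSet (X ^ q ^ n - X : K[X]) Ω).toFinset

theorem card_frobeniusFixedPoints {n : ℕ} (hn : n ≠ 0) :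
    #(frobeniusFixedPoints K n) = q ^ n := by
  have hsep : (X ^ q ^ n - X : K[X]).Separable :=
    galois_poly_separable (ringChar K) _
      (dvd_pow ((CharP.cast_eq_zero_iff K _ _).1 (FiniteField.cast_card_eq_zero K)) hn)
  rw [frobeniusFixedPoints, Set.toFinset_card,
    card_rootSet_eq_natDegree hsep (IsAlgClosed.splits _),
    FiniteField.X_pow_card_pow_sub_X_natDegree_eq K hn Fintype.one_lt_card]

theorem mem_frobeniusFixedPoints {n : ℕ} (hn : n ≠ 0) {x : Ω} :
    x ∈ frobeniusFixedPoints K n ↔ (minpoly K x).natDegree ∣ n := by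
  rw [frobeniusFixedPoints, Set.mem_toFinset,
    mem_rootSet_of_ne (FiniteField.X_pow_card_pow_sub_X_ne_zero K hn Fintype.one_lt_card),
    ← minpoly.dvd_iff,
    (minpoly.irreducible
      (Algebra.IsIntegral.isIntegral x)).natDegree_dvd_iff_dvd_X_pow_card_pow_sub_X,
    Nat.card_eq_fintype_card]

theorem card_filter_natDegree_minpoly_eq {n d : ℕ} (hn : n ≠ 0) (hd : d ∣ n) :
    #{x ∈ frobeniusFixedPoints K n | (minpoly K x).natDegree = d}
      = monicIrreducibleCount K d * d := by
  classical
  set D := {x ∈ frobeniusFixedPoints K n | (minpoly K x).natDegree = d}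
  have hmem : ∀ P : K[X], P ∈ D.image (minpoly K) ↔ P.Monic ∧ Irreducible P ∧ P.natDegree = d := by
    intro P
    simp only [mem_image, D, mem_filter, mem_frobeniusFixedPoints hn]
    constructor
    · rintro ⟨x, ⟨-, rfl⟩, rfl⟩
      have hx := Algebra.IsIntegral.isIntegral (R := K) x
      exact ⟨minpoly.monic hx, minpoly.irreducible hx, rfl⟩
    · rintro ⟨hmon, hirr, rfl⟩
      obtain ⟨x, hx⟩ := IsAlgClosed.exists_aeval_eq_zero Ω P (degree_pos_of_irreducible hirr).ne'
      rw [← minpoly.eq_iff_aeval_eq_zero hirr hmon] at hx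
      exact ⟨x, by rw [← hx]; exact ⟨hd, rfl⟩, hx.symm⟩
  have hfiber : ∀ P ∈ D.image (minpoly K), #{x ∈ D | minpoly K x = P} = d := by
    intro P hP
    obtain ⟨hmon, hirr, rfl⟩ := (hmem P).1 hP
    have hroots : {x ∈ D | minpoly K x = P} = (P.rootSet Ω).toFinset := by
      ext x
      simp only [D, mem_filter, mem_frobeniusFixedPoints hn, Set.mem_toFinset,
        mem_rootSet_of_ne hmon.ne_zero, ← minpoly.eq_iff_aeval_eq_zero hirr hmon]
      constructor
      · rintro ⟨-, rfl⟩; rfl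
      · rintro rfl; exact ⟨⟨hd, rfl⟩, rfl⟩
    rw [hroots, Set.toFinset_card, card_rootSet_eq_natDegree
      (PerfectField.separable_of_irreducible hirr) (IsAlgClosed.splits _)]
  have hcount : monicIrreducibleCount K d = #(D.image (minpoly K)) := by
    rw [monicIrreducibleCount, ← Nat.card_eq_finsetCard]
    exact Nat.card_congr (Equiv.subtypeEquivRight fun P => (hmem P).symm)
  rw [card_eq_sum_card_fiberwise fun x hx => mem_image_of_mem (minpoly K) hx,
    sum_congr rfl hfiber, sum_const, smul_eq_mul, hcount]

theorem sum_divisors_monicIrreducibleCount_mul {n : ℕ} (hn : n ≠ 0) :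
    ∑ d ∈ n.divisors, monicIrreducibleCount K d * d = q ^ n := by
  rw [← card_frobeniusFixedPoints hn,
    card_eq_sum_card_fiberwise (f := fun x => (minpoly K x).natDegree) (t := n.divisors)
      fun x hx => Nat.mem_divisors.2 ⟨(mem_frobeniusFixedPoints hn).1 hx, hn⟩]
  exact sum_congr rfl fun d hd =>
    (card_filter_natDegree_minpoly_eq hn (Nat.dvd_of_mem_divisors hd)).symm

theorem monicIrreducibleCount_mul_le (n : ℕ) : monicIrreducibleCount K n * n ≤ q ^ n := by
  rcases eq_or_ne n 0 with rfl | hn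
  · simp
  rw [← sum_divisors_monicIrreducibleCount_mul hn]
  exact single_le_sum (f := fun d => monicIrreducibleCount K d * d) (fun _ _ => Nat.zero_le _)
    (Nat.mem_divisors_self n hn)

theorem pow_le_monicIrreducibleCount_mul_add {n : ℕ} (hn : n ≠ 0) :
    q ^ n ≤ monicIrreducibleCount K n * n + ∑ d ∈ n.properDivisors, q ^ d := by
  rw [← sum_divisors_monicIrreducibleCount_mul hn, ← Nat.cons_self_properDivisors hn, sum_cons]
  gcongr with d
  exact monicIrreducibleCount_mul_le d

end Counting

section Estimates

variable {K : Type} [Field K] [Fintype K]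

local notation "q" => Fintype.card K

theorem abs_monicIrreducibleCount_mul_sub_pow_le {n : ℕ} (hn : n ≠ 0) :
    |(monicIrreducibleCount K n * n : ℝ) - q ^ n| ≤ 2 * (q : ℝ) ^ ((n : ℝ) / 2) := by
  have hupper : monicIrreducibleCount K n * n ≤ q ^ n := monicIrreducibleCount_mul_le n
  have hlower : q ^ n ≤ monicIrreducibleCount K n * n + 2 * q ^ (n / 2) :=
    (pow_le_monicIrreducibleCount_mul_add hn).trans <| Nat.add_le_add_left
      (Nat.sum_pow_le_two_mul_pow Fintype.one_lt_card fun _ => Nat.le_half_of_mem_properDivisors) _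
  have hupper' : (monicIrreducibleCount K n * n : ℝ) ≤ q ^ n := by exact_mod_cast hupper
  have hlower' : (q : ℝ) ^ n ≤ monicIrreducibleCount K n * n + 2 * (q : ℝ) ^ (n / 2) := by
    exact_mod_cast hlower
  have hbridge := pow_div_le_rpow_div (x := q) (Nat.one_le_cast.2 Fintype.card_pos) n 2
  push_cast at hbridge
  rw [abs_sub_comm, abs_of_nonneg (sub_nonneg.2 hupper')]
  linarith

theorem sum_monicIrreducibleCount_mul_sq_le {S : Finset ℕ} {M : ℕ} (hS : ∀ m ∈ S, m ≤ M) :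
    ∑ m ∈ S, monicIrreducibleCount K m * m ^ 2 ≤ 2 * M * q ^ M := by
  calc ∑ m ∈ S, monicIrreducibleCount K m * m ^ 2 ≤ ∑ m ∈ S, M * q ^ m := by
        refine sum_le_sum fun m hm => ?_
        rw [sq, ← mul_assoc, mul_comm M]
        exact Nat.mul_le_mul (monicIrreducibleCount_mul_le m) (hS m hm)
    _ = M * ∑ m ∈ S, q ^ m := (mul_sum _ _ _).symm
    _ ≤ M * (2 * q ^ M) := Nat.mul_le_mul_left M (Nat.sum_pow_le_two_mul_pow Fintype.one_lt_card hS)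
    _ = 2 * M * q ^ M := by ring

variable {E : ℕ → ℝ}

theorem weighted_sum_nonneg (hE : ∀ m, 0 ≤ E m ∧ E m ≤ 1) (S : Finset ℕ) :
    0 ≤ ∑ m ∈ S, E m * (monicIrreducibleCount K m : ℝ) * (m : ℝ) ^ 2 :=
  sum_nonneg fun m _ => by have := (hE m).1; positivity

theorem weighted_sum_le_of_mul_le {S : Finset ℕ} {c k : ℕ} (hE : ∀ m, 0 ≤ E m ∧ E m ≤ 1)
    (hc : 0 < c) (hS : ∀ m ∈ S, c * m ≤ k) :
    ∑ m ∈ S, E m * (monicIrreducibleCount K m : ℝ) * (m : ℝ) ^ 2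
      ≤ 2 * k * (q : ℝ) ^ ((k : ℝ) / c) := by
  have hSM : ∀ m ∈ S, m ≤ k / c := fun m hm =>
    (Nat.le_div_iff_mul_le hc).2 (by rw [mul_comm]; exact hS m hm)
  have hcount :
      (∑ m ∈ S, monicIrreducibleCount K m * m ^ 2 : ℝ) ≤ 2 * (k / c : ℕ) * q ^ (k / c) := by
    exact_mod_cast sum_monicIrreducibleCount_mul_sq_le hSM
  calc ∑ m ∈ S, E m * (monicIrreducibleCount K m : ℝ) * (m : ℝ) ^ 2
      ≤ ∑ m ∈ S, (monicIrreducibleCount K m : ℝ) * (m : ℝ) ^ 2 :=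
        sum_le_sum fun m _ => by
          rw [mul_assoc]
          exact mul_le_of_le_one_left (by positivity) (hE m).2
    _ ≤ 2 * (k / c : ℕ) * (q : ℝ) ^ (k / c) := hcount
    _ ≤ 2 * k * (q : ℝ) ^ ((k : ℝ) / c) := by
        gcongr
        · exact_mod_cast Nat.div_le_self k c
        · exact pow_div_le_rpow_div (Nat.one_le_cast.2 Fintype.card_pos) k c

theorem abs_weighted_sum_sub_main_term_le {S : Finset ℕ} {k : ℕ} (hE : ∀ m, 0 ≤ E m ∧ E m ≤ 1)
    (hkS : k ∈ S) (hS : S ⊆ k.divisors) :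
    |∑ m ∈ S, E m * (monicIrreducibleCount K m : ℝ) * (m : ℝ) ^ 2 - E k * k * (q : ℝ) ^ k|
      ≤ 4 * k * (q : ℝ) ^ ((k : ℝ) / 2) := by
  have hk : k ≠ 0 := Nat.ne_of_gt (Nat.pos_of_mem_divisors (hS hkS))
  have hmain : |E k * (monicIrreducibleCount K k : ℝ) * (k : ℝ) ^ 2 - E k * k * (q : ℝ) ^ k|
      ≤ 2 * k * (q : ℝ) ^ ((k : ℝ) / 2) := by
    have hEk : 0 ≤ E k * k := mul_nonneg (hE k).1 k.cast_nonneg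
    calc |E k * (monicIrreducibleCount K k : ℝ) * (k : ℝ) ^ 2 - E k * k * (q : ℝ) ^ k|
        = |E k * k * ((monicIrreducibleCount K k * k : ℝ) - q ^ k)| := by congr 1; ring
      _ = E k * k * |(monicIrreducibleCount K k * k : ℝ) - q ^ k| := by
          rw [abs_mul, abs_of_nonneg hEk]
      _ ≤ k * (2 * (q : ℝ) ^ ((k : ℝ) / 2)) :=
          mul_le_mul (mul_le_of_le_one_left k.cast_nonneg (hE k).2)
            (abs_monicIrreducibleCount_mul_sub_pow_le hk) (abs_nonneg _) k.cast_nonneg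
      _ = 2 * k * (q : ℝ) ^ ((k : ℝ) / 2) := by ring
  have hrest := weighted_sum_le_of_mul_le (K := K) (S := S.erase k) hE two_pos fun m hm => by
    rw [mul_comm, ← Nat.le_div_iff_mul_le two_pos]
    exact Nat.le_half_of_mem_properDivisors <| Nat.mem_properDivisors.2
      ⟨Nat.dvd_of_mem_divisors (hS (mem_of_mem_erase hm)),
        lt_of_le_of_ne (Nat.divisor_le (hS (mem_of_mem_erase hm))) (ne_of_mem_erase hm)⟩
  have hrest0 := weighted_sum_nonneg (K := K) hE (S.erase k)
  push_cast at hrest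
  rw [← add_sum_erase S _ hkS]
  rw [abs_le] at hmain ⊢
  constructor <;> linarith [hmain.1, hmain.2]

end Estimates

theorem mul_dvd_of_mul_dvd_mul_of_not_dvd {p m k : ℕ} {a : ℤ} (hp : p.Prime) (hmk : m ∣ k)
    (ha : ¬ (p : ℤ) ∣ a) (h : (m : ℤ) * p ∣ a * k) : m * p ∣ k := by
  obtain ⟨t, rfl⟩ := hmk
  rcases eq_or_ne m 0 with rfl | hm
  · simp
  have hpat : (p : ℤ) ∣ a * t := by
    rw [Nat.cast_mul, mul_left_comm] at h
    exact (mul_dvd_mul_iff_left (Int.natCast_ne_zero.2 hm)).1 h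
  have hpt : p ∣ t :=
    Int.natCast_dvd_natCast.1 (((Nat.prime_iff_prime_int.1 hp).dvd_mul.1 hpat).resolve_left ha)
  exact Nat.mul_dvd_mul_left m hpt

theorem three_mul_le_of_dvd_of_dvd {m k₁ k₂ : ℕ} (h₁ : m ∣ k₁) (h₂ : m ∣ k₂) (hk₂ : 0 < k₂)
    (hle : k₂ ≤ k₁) (hne : k₁ ≠ k₂) (hne₂ : k₁ ≠ 2 * k₂) : 3 * m ≤ k₁ := by
  obtain ⟨c, rfl⟩ := h₁
  obtain ⟨d, rfl⟩ := h₂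
  have hm : 0 < m := Nat.pos_of_mul_pos_right hk₂
  have hd : 0 < d := Nat.pos_of_mul_pos_left hk₂
  have hdc : d ≤ c := Nat.le_of_mul_le_mul_left hle hm
  have hcd : c ≠ d := fun h => hne (by rw [h])
  have hcd₂ : c ≠ 2 * d := fun h => hne₂ (by rw [h]; ring)
  rw [mul_comm]
  exact Nat.mul_le_mul_left m (by omega)

open Classical in
theorem elementary_sum_estimate_general (p q : ℕ) (hp : p.Prime)
    (K : Type) [Field K] [Fintype K] (hK : Fintype.card K = q)
    (E : ℕ → ℝ) (hE01 : ∀ m, 0 ≤ E m ∧ E m ≤ 1) :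
    ∃ C : ℝ, 0 < C ∧ ∀ (k₁ k₂ : ℕ) (e₁ e₂ h₁ h₂ : ℤ),
      0 < k₂ → k₂ ≤ k₁ →
      (e₁ = 1 ∨ e₁ = -1) → (e₂ = 1 ∨ e₂ = -1) →
      ¬ (p : ℤ) ∣ h₁ → ¬ (p : ℤ) ∣ h₂ →
      ((k₁ = k₂ → (p : ℤ) ∣ (e₁ * h₁ + e₂ * h₂) →
          |(∑ m ∈ (Nat.gcd k₁ k₂).divisors.filter (fun m =>
                ¬ m * p ∣ k₁ ∧ ¬ m * p ∣ k₂ ∧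
                ((m : ℤ) * p ∣ (e₁ * h₁ * k₁ + e₂ * h₂ * k₂))),
              E m * (monicIrreducibleCount K m : ℝ) * (m : ℝ) ^ 2)
            - E k₁ * k₁ * (q : ℝ) ^ k₁| ≤ C * k₁ * (q : ℝ) ^ ((k₁ : ℝ) / 2)) ∧
        (k₁ = k₂ → ¬ (p : ℤ) ∣ (e₁ * h₁ + e₂ * h₂) →
          (∑ m ∈ (Nat.gcd k₁ k₂).divisors.filter (fun m =>
                ¬ m * p ∣ k₁ ∧ ¬ m * p ∣ k₂ ∧
                ((m : ℤ) * p ∣ (e₁ * h₁ * k₁ + e₂ * h₂ * k₂))),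
              E m * (monicIrreducibleCount K m : ℝ) * (m : ℝ) ^ 2) = 0) ∧
        (k₁ = 2 * k₂ →
          |∑ m ∈ (Nat.gcd k₁ k₂).divisors.filter (fun m =>
                ¬ m * p ∣ k₁ ∧ ¬ m * p ∣ k₂ ∧
                ((m : ℤ) * p ∣ (e₁ * h₁ * k₁ + e₂ * h₂ * k₂))),
              E m * (monicIrreducibleCount K m : ℝ) * (m : ℝ) ^ 2|
            ≤ C * k₁ * (q : ℝ) ^ ((k₁ : ℝ) / 2)) ∧
        (k₁ ≠ k₂ → k₁ ≠ 2 * k₂ →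
          |∑ m ∈ (Nat.gcd k₁ k₂).divisors.filter (fun m =>
                ¬ m * p ∣ k₁ ∧ ¬ m * p ∣ k₂ ∧
                ((m : ℤ) * p ∣ (e₁ * h₁ * k₁ + e₂ * h₂ * k₂))),
              E m * (monicIrreducibleCount K m : ℝ) * (m : ℝ) ^ 2|
            ≤ C * k₁ * (q : ℝ) ^ ((k₁ : ℝ) / 3))) := by
  subst hK
  refine ⟨4, by norm_num, fun k₁ k₂ e₁ e₂ h₁ h₂ hk₂ hk₁₂ _ _ _ _ => ⟨?_, ?_, ?_, ?_⟩⟩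
  · rintro rfl ⟨t, ht⟩
    rw [Nat.gcd_self]
    refine abs_weighted_sum_sub_main_term_le hE01
      (mem_filter.2 ⟨Nat.mem_divisors_self k₁ hk₂.ne', ?_⟩) (filter_subset _ _)
    have hk : ¬ k₁ * p ∣ k₁ := fun h =>
      hp.one_lt.not_ge (Nat.le_of_mul_le_mul_left (by simpa using Nat.le_of_dvd hk₂ h) hk₂)
    exact ⟨hk, hk, ⟨t, by rw [← add_mul, ht]; ring⟩⟩
  · rintro rfl hndvd
    rw [Nat.gcd_self]
    refine sum_eq_zero fun m hm => absurd ?_ (mem_filter.1 hm).2.1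
    obtain ⟨hmk, -, -, hdvd⟩ := mem_filter.1 hm
    rw [← add_mul] at hdvd
    exact mul_dvd_of_mul_dvd_mul_of_not_dvd hp (Nat.dvd_of_mem_divisors hmk) hndvd hdvd
  · rintro rfl
    rw [abs_of_nonneg (weighted_sum_nonneg hE01 _)]
    refine (weighted_sum_le_of_mul_le (k := 2 * k₂) hE01 two_pos fun m hm => ?_).trans ?_
    · exact Nat.mul_le_mul_left 2
        ((Nat.divisor_le (mem_filter.1 hm).1).trans (Nat.gcd_le_right _ hk₂))
    · push_cast
      gcongr
      norm_num
  · intro hne hne₂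
    rw [abs_of_nonneg (weighted_sum_nonneg hE01 _)]
    refine (weighted_sum_le_of_mul_le (k := k₁) hE01 three_pos fun m hm => ?_).trans ?_
    · have hm := Nat.dvd_of_mem_divisors (mem_filter.1 hm).1
      exact three_mul_le_of_dvd_of_dvd (hm.trans (Nat.gcd_dvd_left _ _))
        (hm.trans (Nat.gcd_dvd_right _ _)) hk₂ hk₁₂ hne hne₂
    · push_cast
      gcongr
      norm_num

open Classical in
/-- Estimates for `T = Σ_{m | (k₁,k₂), mp ∤ k₁, k₂, mp | e₁h₁k₁+e₂h₂k₂} E(m) π(m) m²`,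
with `π(m)` the count of monic irreducibles of degree `m` over `F_q` and
`E(m) = 1 + O(m q^{−m})`, `0 ≤ E(m) ≤ 1`, uniformly in `k₁ ≥ k₂ > 0`. -/
theorem elementary_sum_estimate (p q : ℕ) (hp : p.Prime) (hodd : Odd p)
    (hq : ∃ a : ℕ, 0 < a ∧ q = p ^ a)
    (K : Type) [Field K] [Fintype K] (hK : Fintype.card K = q)
    (E : ℕ → ℝ) (hE01 : ∀ m, 0 ≤ E m ∧ E m ≤ 1)
    (CE : ℝ) (hE : ∀ m : ℕ, 1 ≤ m → |E m - 1| ≤ CE * m / (q : ℝ) ^ m) :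
    ∃ C : ℝ, 0 < C ∧ ∀ (k₁ k₂ : ℕ) (e₁ e₂ h₁ h₂ : ℤ),
      0 < k₂ → k₂ ≤ k₁ →
      (e₁ = 1 ∨ e₁ = -1) → (e₂ = 1 ∨ e₂ = -1) →
      ¬ (p : ℤ) ∣ h₁ → ¬ (p : ℤ) ∣ h₂ →
      ((k₁ = k₂ → (p : ℤ) ∣ (e₁ * h₁ + e₂ * h₂) →
          |(∑ m ∈ (Nat.gcd k₁ k₂).divisors.filter (fun m =>
                ¬ m * p ∣ k₁ ∧ ¬ m * p ∣ k₂ ∧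
                ((m : ℤ) * p ∣ (e₁ * h₁ * k₁ + e₂ * h₂ * k₂))),
              E m * (monicIrreducibleCount K m : ℝ) * (m : ℝ) ^ 2)
            - E k₁ * k₁ * (q : ℝ) ^ k₁| ≤ C * k₁ * (q : ℝ) ^ ((k₁ : ℝ) / 2)) ∧
        (k₁ = k₂ → ¬ (p : ℤ) ∣ (e₁ * h₁ + e₂ * h₂) →
          (∑ m ∈ (Nat.gcd k₁ k₂).divisors.filter (fun m =>
                ¬ m * p ∣ k₁ ∧ ¬ m * p ∣ k₂ ∧
                ((m : ℤ) * p ∣ (e₁ * h₁ * k₁ + e₂ * h₂ * k₂))),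
              E m * (monicIrreducibleCount K m : ℝ) * (m : ℝ) ^ 2) = 0) ∧
        (k₁ = 2 * k₂ →
          |∑ m ∈ (Nat.gcd k₁ k₂).divisors.filter (fun m =>
                ¬ m * p ∣ k₁ ∧ ¬ m * p ∣ k₂ ∧
                ((m : ℤ) * p ∣ (e₁ * h₁ * k₁ + e₂ * h₂ * k₂))),
              E m * (monicIrreducibleCount K m : ℝ) * (m : ℝ) ^ 2|
            ≤ C * k₁ * (q : ℝ) ^ ((k₁ : ℝ) / 2)) ∧
        (k₁ ≠ k₂ → k₁ ≠ 2 * k₂ →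
          |∑ m ∈ (Nat.gcd k₁ k₂).divisors.filter (fun m =>
                ¬ m * p ∣ k₁ ∧ ¬ m * p ∣ k₂ ∧
                ((m : ℤ) * p ∣ (e₁ * h₁ * k₁ + e₂ * h₂ * k₂))),
              E m * (monicIrreducibleCount K m : ℝ) * (m : ℝ) ^ 2|
            ≤ C * k₁ * (q : ℝ) ^ ((k₁ : ℝ) / 3))) :=
  elementary_sum_estimate_general p q hp K hK E hE01
end

section
/- Let q > 1, r > 2 an integer, and p an odd prime. Let I_K^± be the Beurling–Selberg trigonometric polynomials of degree ≤ K approximating the characteristic function of a symmetric interval I with K|I| > 1, and let π(m) be the number of monic irreducibles of degree m over F_q. Then the sum S = Σ_{k_1,…,k_r = 1}^{K} Î_K^±(k_1) ⋯ Î_K^±(k_r) q^{−(k_1+⋯+k_r)/2} Σ_{m | gcd(k_1,…,k_r), mp ∤ gcd(k_1,…,k_r)} π(m) m^r is O(1), uniformly in K and I. -/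
open Polynomial

/-- The number of monic irreducible polynomials of degree `m` over `K`. -/
noncomputable def monicIrrCount (K : Type) [Field K] [Fintype K] (m : ℕ) : ℕ :=
  Nat.card {P : K[X] // P.Monic ∧ Irreducible P ∧ P.natDegree = m}

lemma monicIrrCount_le (K : Type) [Field K] [Fintype K] (m : ℕ) :
    monicIrrCount K m ≤ Fintype.card K ^ m := by
  rw [monicIrrCount]
  have hinj : Function.Injective
      (fun P : {P : K[X] // P.Monic ∧ Irreducible P ∧ P.natDegree = m} =>
        (fun i : Fin m => P.1.coeff i)) := by
    rintro ⟨P, hPm, _, hPd⟩ ⟨Q, hQm, _, hQd⟩ h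
    simp only [Subtype.mk.injEq]
    ext n
    rcases lt_trichotomy n m with hn | hn | hn
    · exact congrFun h ⟨n, hn⟩
    · subst hn
      rw [← hPd, hPm.coeff_natDegree, ← hQm.coeff_natDegree, hQd, hPd]
    · rw [Polynomial.coeff_eq_zero_of_natDegree_lt (by omega),
        Polynomial.coeff_eq_zero_of_natDegree_lt (by omega)]
  calc Nat.card {P : K[X] // P.Monic ∧ Irreducible P ∧ P.natDegree = m}
      ≤ Nat.card (Fin m → K) := Nat.card_le_card_of_injective _ hinj
    _ = Fintype.card K ^ m := by simp [Nat.card_eq_fintype_card]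

set_option maxHeartbeats 1000000 in
open Classical in
/-- For `r > 2`, the sum
`S = Σ_{k_1,…,k_r=1}^{K} Î_K^±(k_1)⋯Î_K^±(k_r) q^{−(k_1+⋯+k_r)/2}
  Σ_{m | gcd(k_i), mp ∤ gcd(k_i)} π(m) m^r`
is `O(1)` uniformly in `K` and the interval `I`, for any coefficients satisfying the
Beurling–Selberg bounds `|Î(k)| ≤ 1/(K+1) + min(|I|, π/k)`. -/
theorem beurling_selberg_higher_sum_bounded (p q : ℕ) (hp : p.Prime) (hodd : Odd p)
    (hq1 : 1 < q) (hq : ∃ a : ℕ, 0 < a ∧ q = p ^ a)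
    (K : Type) [Field K] [Fintype K] (hK : Fintype.card K = q)
    (r : ℕ) (hr : 2 < r) :
    ∃ C : ℝ, 0 < C ∧ ∀ (Kb : ℕ) (Ilen : ℝ) (a : ℕ → ℝ),
      0 < Ilen → Ilen < 1 → 1 < (Kb : ℝ) * Ilen →
      (∀ n : ℕ, 1 ≤ n → n ≤ Kb →
        |a n| ≤ 1 / ((Kb : ℝ) + 1) + min Ilen (Real.pi / (n : ℝ))) →
      |∑ kk ∈ Fintype.piFinset (fun _ : Fin r => Finset.Icc 1 Kb),
          (∏ i, a (kk i)) * (q : ℝ) ^ (-(∑ i, (kk i : ℝ)) / 2) *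
          (∑ m ∈ (Finset.univ.gcd kk).divisors.filter
              (fun m => ¬ m * p ∣ Finset.univ.gcd kk),
            (monicIrrCount K m : ℝ) * (m : ℝ) ^ r)| ≤ C := by
  have hq0 : (0:ℝ) < q := by positivity
  have hq1' : (1:ℝ) < q := by exact_mod_cast hq1
  set t : ℝ := (q:ℝ) ^ (-(6:ℝ)⁻¹) with ht
  have ht0 : 0 ≤ t := Real.rpow_nonneg hq0.le _
  have ht1 : t < 1 := Real.rpow_lt_one_of_one_lt_of_neg hq1' (by norm_num)
  have hsum : Summable (fun n : ℕ => (n:ℝ)^2 * t^n) := by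
    simpa using summable_pow_mul_geometric_of_norm_lt_one 2
      (by rwa [Real.norm_eq_abs, abs_of_nonneg ht0])
  set C0 : ℝ := ∑' n : ℕ, (n:ℝ)^2 * t^n with hC0def
  have hC0 : 0 ≤ C0 := tsum_nonneg fun n => by positivity
  refine ⟨(2*C0+1)^r, by positivity, ?_⟩
  intro Kb Ilen a hI0 hI1 hKI ha
  set F : ℕ → ℝ := fun k => 2 * (k:ℝ)^2 * t^k with hF
  have hFnn : ∀ k, 0 ≤ F k := fun k => by simp only [hF]; positivity
  have key : ∀ kk ∈ Fintype.piFinset (fun _ : Fin r => Finset.Icc 1 Kb),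
      |(∏ i, a (kk i)) * (q : ℝ) ^ (-(∑ i, (kk i : ℝ)) / 2) *
        (∑ m ∈ (Finset.univ.gcd kk).divisors.filter
            (fun m => ¬ m * p ∣ Finset.univ.gcd kk),
          (monicIrrCount K m : ℝ) * (m : ℝ) ^ r)| ≤ ∏ i, F (kk i) := by
    intro kk hkk
    have hki : ∀ i, kk i ∈ Finset.Icc 1 Kb := by
      rw [Fintype.mem_piFinset] at hkk; exact hkk
    have hk1 : ∀ i, 1 ≤ kk i := fun i => (Finset.mem_Icc.mp (hki i)).1
    have hkKb : ∀ i, kk i ≤ Kb := fun i => (Finset.mem_Icc.mp (hki i)).2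
    set g : ℕ := Finset.univ.gcd kk with hg
    have hgdvd : ∀ i, g ∣ kk i := fun i => Finset.gcd_dvd (Finset.mem_univ i)
    have hgle : ∀ i, g ≤ kk i := fun i => Nat.le_of_dvd (hk1 i) (hgdvd i)
    have hg1 : 1 ≤ g := by
      rcases Nat.eq_zero_or_pos g with h0 | h
      · exfalso
        have hd := hgdvd ⟨0, by omega⟩
        rw [h0] at hd
        have h1 := Nat.eq_zero_of_zero_dvd hd
        have h2 := hk1 ⟨0, by omega⟩
        omega
      · exact h
    set B : ℝ := (q : ℝ) ^ (-(∑ i, (kk i : ℝ)) / 2) with hB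
    have hB0 : 0 ≤ B := Real.rpow_nonneg hq0.le _
    set Cc : ℝ := ∑ m ∈ (Finset.univ.gcd kk).divisors.filter
            (fun m => ¬ m * p ∣ Finset.univ.gcd kk),
          (monicIrrCount K m : ℝ) * (m : ℝ) ^ r with hCc
    have hCc0 : 0 ≤ Cc := Finset.sum_nonneg fun m _ => by positivity
    -- |a| prod bound
    have h1 : ∏ i, |a (kk i)| ≤ 2 ^ r := by
      calc ∏ i, |a (kk i)| ≤ ∏ _i : Fin r, (2:ℝ) := by
            apply Finset.prod_le_prod (fun i _ => abs_nonneg _)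
            intro i _
            have := ha (kk i) (hk1 i) (hkKb i)
            have h2 : 1 / ((Kb:ℝ)+1) ≤ 1 := by
              rw [div_le_one (by positivity)]
              have hc : (0:ℝ) ≤ (Kb:ℝ) := Nat.cast_nonneg Kb
              linarith
            have h3 : min Ilen (Real.pi / (kk i : ℝ)) ≤ Ilen := min_le_left _ _
            linarith
        _ = 2 ^ r := by simp
    -- inner sum bound
    have h2 : Cc ≤ (g:ℝ) * ((q:ℝ)^g * (g:ℝ)^r) := by
      have hbd : ∀ m ∈ (Finset.univ.gcd kk).divisors.filter
            (fun m => ¬ m * p ∣ Finset.univ.gcd kk),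
          (monicIrrCount K m : ℝ) * (m : ℝ) ^ r ≤ (q:ℝ)^g * (g:ℝ)^r := by
        intro m hm
        rw [Finset.mem_filter, Nat.mem_divisors] at hm
        have hmg : m ≤ g := Nat.le_of_dvd (by omega) hm.1.1
        have hcount : (monicIrrCount K m : ℝ) ≤ (q:ℝ)^m := by
          have := monicIrrCount_le K m
          rw [hK] at this
          exact_mod_cast this
        have hqm : (q:ℝ)^m ≤ (q:ℝ)^g := pow_le_pow_right₀ hq1'.le hmg
        have hmr : (m:ℝ)^r ≤ (g:ℝ)^r := by
          apply pow_le_pow_left₀ (by positivity)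
          exact_mod_cast hmg
        exact mul_le_mul (le_trans hcount hqm) hmr (by positivity) (by positivity)
      have hcard : ((Finset.univ.gcd kk).divisors.filter
            (fun m => ¬ m * p ∣ Finset.univ.gcd kk)).card ≤ g := by
        have hc1 := Finset.card_filter_le (Finset.univ.gcd kk).divisors
            (fun m => ¬ m * p ∣ Finset.univ.gcd kk)
        have hsub : (Finset.univ.gcd kk).divisors ⊆ Finset.Icc 1 g := by
          intro d hd
          rw [Nat.mem_divisors] at hd
          rw [Finset.mem_Icc]
          exact ⟨Nat.pos_of_dvd_of_pos hd.1 (by omega), Nat.le_of_dvd (by omega) hd.1⟩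
        have hc2 := Finset.card_le_card hsub
        have hc3 : (Finset.Icc 1 g).card = g := by simp
        omega
      have hstep := Finset.sum_le_card_nsmul _ _ _ hbd
      rw [nsmul_eq_mul] at hstep
      refine le_trans hstep ?_
      apply mul_le_mul_of_nonneg_right _ (by positivity)
      exact_mod_cast hcard
    -- combine B with g-powers
    have h3 : B * ((g:ℝ) * ((q:ℝ)^g * (g:ℝ)^r)) ≤ (∏ i, ((kk i:ℝ))^2) * ∏ i, t^(kk i) := by
      have hgpow : (g:ℝ) * (g:ℝ)^r ≤ ∏ i, ((kk i:ℝ))^2 := by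
        calc (g:ℝ) * (g:ℝ)^r = (g:ℝ)^(r+1) := by ring
          _ ≤ (g:ℝ)^(2*r) := by
              apply pow_le_pow_right₀ (by exact_mod_cast hg1)
              omega
          _ = ∏ _i : Fin r, ((g:ℝ))^2 := by
              rw [Finset.prod_const, Finset.card_univ, Fintype.card_fin, ← pow_mul]
          _ ≤ ∏ i, ((kk i:ℝ))^2 := by
              apply Finset.prod_le_prod (fun i _ => by positivity)
              intro i _
              apply pow_le_pow_left₀ (by positivity)
              exact_mod_cast hgle i
      have hBq : B * (q:ℝ)^g ≤ ∏ i, t^(kk i) := by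
        have hN : (3:ℕ) * g ≤ ∑ i, kk i := by
          calc 3 * g ≤ r * g := Nat.mul_le_mul_right g (by omega)
            _ = (Finset.univ : Finset (Fin r)).card • g := by simp [mul_comm]
            _ ≤ ∑ i, kk i := Finset.card_nsmul_le_sum _ _ _ (fun i _ => hgle i)
        have hS : (∑ i, (kk i : ℝ)) = ((∑ i, kk i : ℕ) : ℝ) := by push_cast; ring
        have hprod : ∏ i, t^(kk i) = (q:ℝ) ^ (-(6:ℝ)⁻¹ * ((∑ i, kk i : ℕ) : ℝ)) := by
          rw [Finset.prod_pow_eq_pow_sum]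
          rw [ht, ← Real.rpow_natCast ((q:ℝ) ^ (-(6:ℝ)⁻¹)) _, ← Real.rpow_mul hq0.le]
        have hqg : (q:ℝ)^g = (q:ℝ) ^ ((g:ℕ) : ℝ) := by
          rw [Real.rpow_natCast]
        rw [hprod, hB, hqg, ← Real.rpow_add hq0]
        apply Real.rpow_le_rpow_left_iff hq1' |>.mpr
        rw [hS]
        have hN' : 3 * (g:ℝ) ≤ ((∑ i, kk i : ℕ) : ℝ) := by exact_mod_cast hN
        linarith
      calc B * ((g:ℝ) * ((q:ℝ)^g * (g:ℝ)^r))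
          = ((g:ℝ) * (g:ℝ)^r) * (B * (q:ℝ)^g) := by ring
        _ ≤ (∏ i, ((kk i:ℝ))^2) * ∏ i, t^(kk i) := by
            apply mul_le_mul hgpow hBq (by positivity) (Finset.prod_nonneg fun i _ => by positivity)
    -- final assembly
    have hRHS : ∏ i, F (kk i) = 2^r * ((∏ i, ((kk i:ℝ))^2) * ∏ i, t^(kk i)) := by
      simp only [hF]
      rw [Finset.prod_mul_distrib, Finset.prod_mul_distrib, Finset.prod_const,
        Finset.card_univ, Fintype.card_fin, mul_assoc]
    rw [abs_mul, abs_mul, abs_of_nonneg hB0, abs_of_nonneg hCc0, Finset.abs_prod, hRHS]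
    calc (∏ i, |a (kk i)|) * B * Cc ≤ 2^r * B * Cc := by
          apply mul_le_mul_of_nonneg_right (mul_le_mul_of_nonneg_right h1 hB0) hCc0
      _ ≤ 2^r * B * ((g:ℝ) * ((q:ℝ)^g * (g:ℝ)^r)) := by
          apply mul_le_mul_of_nonneg_left h2 (by positivity)
      _ = 2^r * (B * ((g:ℝ) * ((q:ℝ)^g * (g:ℝ)^r))) := by ring
      _ ≤ 2^r * ((∏ i, ((kk i:ℝ))^2) * ∏ i, t^(kk i)) := by
          apply mul_le_mul_of_nonneg_left h3 (by positivity)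
  -- sum the bound
  have hFsum : ∑ k ∈ Finset.Icc 1 Kb, F k ≤ 2*C0 + 1 := by
    have hsum2 : Summable F := by
      simp only [hF]
      have := hsum.mul_left 2
      simpa [mul_assoc] using this
    have := Summable.sum_le_tsum (Finset.Icc 1 Kb) (fun k _ => hFnn k) hsum2
    have htsum : ∑' k, F k = 2 * C0 := by
      simp only [hF, hC0def]
      rw [← tsum_mul_left]
      congr 1
      ext k
      ring
    linarith [this, htsum.le]
  calc |∑ kk ∈ Fintype.piFinset (fun _ : Fin r => Finset.Icc 1 Kb),
          (∏ i, a (kk i)) * (q : ℝ) ^ (-(∑ i, (kk i : ℝ)) / 2) *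
          (∑ m ∈ (Finset.univ.gcd kk).divisors.filter
              (fun m => ¬ m * p ∣ Finset.univ.gcd kk),
            (monicIrrCount K m : ℝ) * (m : ℝ) ^ r)|
      ≤ ∑ kk ∈ Fintype.piFinset (fun _ : Fin r => Finset.Icc 1 Kb),
          |(∏ i, a (kk i)) * (q : ℝ) ^ (-(∑ i, (kk i : ℝ)) / 2) *
          (∑ m ∈ (Finset.univ.gcd kk).divisors.filter
              (fun m => ¬ m * p ∣ Finset.univ.gcd kk),
            (monicIrrCount K m : ℝ) * (m : ℝ) ^ r)| := Finset.abs_sum_le_sum_abs _ _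
    _ ≤ ∑ kk ∈ Fintype.piFinset (fun _ : Fin r => Finset.Icc 1 Kb), ∏ i, F (kk i) :=
        Finset.sum_le_sum key
    _ = ∏ _i : Fin r, ∑ k ∈ Finset.Icc 1 Kb, F k := (Finset.prod_univ_sum _ _).symm
    _ = (∑ k ∈ Finset.Icc 1 Kb, F k) ^ r := by rw [Finset.prod_const]; simp
    _ ≤ (2*C0+1)^r := by
        apply pow_le_pow_left₀ (Finset.sum_nonneg fun k _ => hFnn k) hFsum
end
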